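/- Suppose c = c_⋆, where c_⋆ = -1 - x_⋆ - e^{x_⋆} and x_⋆ is the unique positive solution of x e^x/(1+e^x) = 1. Then for every positive integer n, every integer t ≥ 1, every x ∈ Ω_n, and every ε > 0, K_{c,n}^{2t}(x, {x' ∈ Ω_n : |x' − m_c^{2t}(x)| ≥ ε}) ≤ 4 t exp(−32 n ε² / ((|c|+4)² t²)). -/

import Mathlib

open Real MeasureTheory

noncomputable def sigmoid (x : ℝ) : ℝ := Real.exp x / (1 + Real.exp x)

noncomputable def mc (c x : ℝ) : ℝ := _root_.sigmoid (c * x)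

noncomputable def Ker (c : ℝ) (n : ℕ) (i j : Fin (n + 1)) : ℝ :=
  (n.choose (j : ℕ)) * _root_.sigmoid (c * (i : ℕ) / n) ^ (j : ℕ) *
    (1 - _root_.sigmoid (c * (i : ℕ) / n)) ^ (n - (j : ℕ))

noncomputable def KerPow (c : ℝ) (n : ℕ) : ℕ → Fin (n + 1) → Fin (n + 1) → ℝ
  | 0 => fun i j => if i = j then 1 else 0
  | t + 1 => fun i j => ∑ k, KerPow c n t i k * Ker c n k j

noncomputable def piWeight (c : ℝ) (n : ℕ) (j : Fin (n + 1)) : ℝ :=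
  (n.choose (j : ℕ)) * (1 + Real.exp (c * (j : ℕ) / n)) ^ n

noncomputable def piDist (c : ℝ) (n : ℕ) (j : Fin (n + 1)) : ℝ :=
  piWeight c n j / ∑ k, piWeight c n k

noncomputable def tvDist {m : ℕ} (p q : Fin m → ℝ) : ℝ :=
  ⨆ A : Finset (Fin m), |∑ i ∈ A, p i - ∑ i ∈ A, q i|


open scoped Classical

noncomputable def dsig (y : ℝ) : ℝ := Real.exp y / (1 + Real.exp y) ^ 2

lemma one_add_exp_pos (y : ℝ) : 0 < 1 + Real.exp y := by positivity

lemma one_add_exp_ne (y : ℝ) : 1 + Real.exp y ≠ 0 := (one_add_exp_pos y).ne'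

lemma sigmoid_pos (y : ℝ) : 0 < _root_.sigmoid y := by
  unfold _root_.sigmoid; positivity

lemma sigmoid_lt_one (y : ℝ) : _root_.sigmoid y < 1 := by
  unfold _root_.sigmoid
  rw [div_lt_one (one_add_exp_pos y)]
  linarith

lemma hasDerivAt_sigmoid (y : ℝ) : HasDerivAt _root_.sigmoid (dsig y) y := by
  have h : HasDerivAt (fun x : ℝ => Real.exp x / (1 + Real.exp x))
      ((Real.exp y * (1 + Real.exp y) - Real.exp y * Real.exp y) / (1 + Real.exp y) ^ 2) y :=
    (Real.hasDerivAt_exp y).div ((Real.hasDerivAt_exp y).const_add 1) (one_add_exp_ne y)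
  convert h using 1
  · rfl
  unfold dsig; field_simp; ring

lemma dsig_nonneg (y : ℝ) : 0 ≤ dsig y := by unfold dsig; positivity

lemma dsig_le_quarter (y : ℝ) : dsig y ≤ 1 / 4 := by
  unfold dsig
  rw [div_le_div_iff₀ (by positivity) (by norm_num)]
  nlinarith [sq_nonneg (1 - Real.exp y)]

lemma dsig_eq (y : ℝ) : dsig y = _root_.sigmoid y * (1 - _root_.sigmoid y) := by
  unfold dsig _root_.sigmoid
  field_simp
  ring

lemma sigmoid_lip (a b : ℝ) : |_root_.sigmoid a - _root_.sigmoid b| ≤ 1 / 4 * |a - b| := by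
  have := Convex.norm_image_sub_le_of_norm_deriv_le (𝕜 := ℝ) (f := _root_.sigmoid) (s := Set.univ)
    (fun x _ => (_root_.hasDerivAt_sigmoid x).differentiableAt)
    (fun x _ => by rw [(_root_.hasDerivAt_sigmoid x).deriv, Real.norm_eq_abs,
      abs_of_nonneg (dsig_nonneg x)]; exact dsig_le_quarter x)
    convex_univ (Set.mem_univ b) (Set.mem_univ a)
  simpa [Real.norm_eq_abs] using this

lemma hasDerivAt_mc (c x : ℝ) : HasDerivAt (mc c) (dsig (c * x) * c) x := by
  have := (_root_.hasDerivAt_sigmoid (c * x)).comp x ((hasDerivAt_id x).const_mul c)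
  exact this.congr_deriv (by ring)

lemma mc_lip (c a b : ℝ) : |mc c a - mc c b| ≤ |c| / 4 * |a - b| := by
  have h := sigmoid_lip (c * a) (c * b)
  have : |c * a - c * b| = |c| * |a - b| := by rw [← mul_sub, abs_mul]
  unfold mc
  rw [this] at h
  linarith [h]

section Key
variable {xs c : ℝ}

lemma xs_facts (hxs : 0 < xs ∧ xs * Real.exp xs / (1 + Real.exp xs) = 1) :
    xs * Real.exp xs = 1 + Real.exp xs ∧ Real.exp (-xs) = xs - 1 := by
  obtain ⟨hx0, hx⟩ := hxs
  have h1 : xs * Real.exp xs = 1 + Real.exp xs := by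
    field_simp at hx; linarith
  refine ⟨h1, ?_⟩
  have h2 : Real.exp xs * (xs - 1) = 1 := by ring_nf; linarith [h1]
  have := Real.exp_ne_zero xs
  rw [Real.exp_neg]
  field_simp
  linarith [h2]

lemma F_ineq (hxs : 0 < xs ∧ xs * Real.exp xs / (1 + Real.exp xs) = 1) (u : ℝ) :
    (1 + xs + Real.exp xs) * u ≤ Real.exp u + Real.exp (-u) + u ^ 2 + 2 := by
  obtain ⟨h1, h2⟩ := xs_facts hxs
  have e1 : Real.exp xs * ((u - xs) + 1) ≤ Real.exp u := by
    have := Real.add_one_le_exp (u - xs)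
    have hp := (Real.exp_pos xs).le
    calc Real.exp xs * ((u - xs) + 1) ≤ Real.exp xs * Real.exp (u - xs) :=
          mul_le_mul_of_nonneg_left this hp
      _ = Real.exp u := by rw [← Real.exp_add]; ring_nf
  have e2 : Real.exp (-xs) * ((xs - u) + 1) ≤ Real.exp (-u) := by
    have := Real.add_one_le_exp (xs - u)
    have hp := (Real.exp_pos (-xs)).le
    calc Real.exp (-xs) * ((xs - u) + 1) ≤ Real.exp (-xs) * Real.exp (xs - u) :=
          mul_le_mul_of_nonneg_left this hp
      _ = Real.exp (-u) := by rw [← Real.exp_add]; ring_nf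
  rw [h2] at e2
  nlinarith [sq_nonneg (u - xs), e1, e2, h1]

lemma key_ineq (hxs : 0 < xs ∧ xs * Real.exp xs / (1 + Real.exp xs) = 1)
    (hc : c = -1 - xs - Real.exp xs) (y : ℝ) :
    c ^ 2 * dsig y * dsig (c * _root_.sigmoid y) ≤ 1 := by
  set b : ℝ := 1 + xs + Real.exp xs with hb
  have hbpos : 0 < b := by have := hxs.1; have := Real.exp_pos xs; positivity
  have hcb : c = -b := by rw [hc, hb]; ring
  set s : ℝ := _root_.sigmoid y with hs
  have hs0 : 0 < s := _root_.sigmoid_pos y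
  have hs1 : s < 1 := _root_.sigmoid_lt_one y
  set u : ℝ := b * s with hu
  -- dsig (c*s) = exp u / (1+exp u)^2
  have hds2 : dsig (c * s) = Real.exp u / (1 + Real.exp u) ^ 2 := by
    rw [hcb]
    have : -b * s = -u := by rw [hu]; ring
    rw [this]
    unfold dsig
    rw [Real.exp_neg]
    have h1 : Real.exp u ≠ 0 := Real.exp_ne_zero u
    have h2 : 1 + Real.exp u ≠ 0 := one_add_exp_ne u
    field_simp
    ring
  have hds1 : dsig y = s * (1 - s) := dsig_eq y
  rw [hds1, hds2, hcb]
  have hF := F_ineq hxs u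
  rw [← hb] at hF
  have hexpu := Real.exp_pos u
  have hden : (0:ℝ) < (1 + Real.exp u) ^ 2 := by positivity
  have hmain : u * (b - u) * Real.exp u ≤ (1 + Real.exp u) ^ 2 := by
    have hmul : (b * u) * Real.exp u ≤ (Real.exp u + Real.exp (-u) + u ^ 2 + 2) * Real.exp u :=
      mul_le_mul_of_nonneg_right hF hexpu.le
    have hinv : Real.exp (-u) * Real.exp u = 1 := by
      rw [← Real.exp_add]; simp
    nlinarith [hmul, hinv]
  have h1 : (-b) ^ 2 * (s * (1 - s)) = u * (b - u) := by rw [hu]; ring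
  rw [h1, show u * (b - u) * (Real.exp u / (1 + Real.exp u) ^ 2)
      = u * (b - u) * Real.exp u / (1 + Real.exp u) ^ 2 from by ring,
    div_le_one hden]
  exact hmain

lemma two_lip (hxs : 0 < xs ∧ xs * Real.exp xs / (1 + Real.exp xs) = 1)
    (hc : c = -1 - xs - Real.exp xs) (a b : ℝ) :
    |mc c (mc c a) - mc c (mc c b)| ≤ |a - b| := by
  have hder : ∀ x : ℝ, HasDerivAt (fun z => mc c (mc c z))
      (dsig (c * mc c x) * c * (dsig (c * x) * c)) x := fun x =>
    (hasDerivAt_mc c (mc c x)).comp x (hasDerivAt_mc c x)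
  have hbd : ∀ x : ℝ, ‖dsig (c * mc c x) * c * (dsig (c * x) * c)‖ ≤ 1 := by
    intro x
    rw [Real.norm_eq_abs]
    have h := key_ineq hxs hc (c * x)
    have hval : dsig (c * mc c x) * c * (dsig (c * x) * c)
        = c ^ 2 * dsig (c * x) * dsig (c * _root_.sigmoid (c * x)) := by unfold mc; ring
    rw [hval, abs_of_nonneg (mul_nonneg (mul_nonneg (sq_nonneg c) (dsig_nonneg _)) (dsig_nonneg _))]
    exact h
  have := Convex.norm_image_sub_le_of_norm_hasDerivWithin_le (𝕜 := ℝ)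
    (f := fun z => mc c (mc c z)) (s := Set.univ) (C := 1)
    (fun x _ => (hder x).hasDerivWithinAt) (fun x _ => hbd x) convex_univ
    (Set.mem_univ b) (Set.mem_univ a)
  simpa [Real.norm_eq_abs] using this

end Key

/-- Hoeffding's lemma, Bernoulli mgf form. -/
lemma hoeff_scalar (p L : ℝ) (h0 : 0 ≤ p) (h1 : p ≤ 1) :
    (1 - p) + p * Real.exp L ≤ Real.exp (L * p + L ^ 2 / 8) := by
  rcases eq_or_lt_of_le h0 with h0' | h0'
  · rw [← h0']
    simpa using Real.one_le_exp (by positivity)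
  rcases eq_or_lt_of_le h1 with h1' | h1'
  · rw [h1']
    have : Real.exp L ≤ Real.exp (L + L^2/8) := Real.exp_le_exp.2 (by nlinarith [sq_nonneg L])
    simpa using this
  -- 0 < p < 1
  set q : ℝ := 1 - p with hq
  have hqpos : 0 < q := by simp [hq]; linarith
  have hden : ∀ z : ℝ, 0 < q + p * Real.exp z := fun z => by positivity
  set a : ℝ := Real.log (p / q) with ha
  have hsig_a : _root_.sigmoid a = p := by
    unfold _root_.sigmoid
    rw [ha, Real.exp_log (by positivity)]
    field_simp
    rw [hq]; ring
  have hsig_eq : ∀ z : ℝ, _root_.sigmoid (z + a) = p * Real.exp z / (q + p * Real.exp z) := by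
    intro z
    unfold _root_.sigmoid
    rw [Real.exp_add, ha, Real.exp_log (by positivity)]
    rw [div_eq_div_iff (by positivity) (hden z).ne']
    field_simp
  set f : ℝ → ℝ := fun z => z * p + z ^ 2 / 8 - Real.log (q + p * Real.exp z) with hf
  set f' : ℝ → ℝ := fun z => p + z / 4 - p * Real.exp z / (q + p * Real.exp z) with hf'
  have hder : ∀ z : ℝ, HasDerivAt f (f' z) z := by
    intro z
    have hlog : HasDerivAt (fun z : ℝ => Real.log (q + p * Real.exp z))
        ((p * Real.exp z) / (q + p * Real.exp z)) z :=
      HasDerivAt.log (((Real.hasDerivAt_exp z).const_mul p).const_add q) (hden z).ne'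
    have hpoly : HasDerivAt (fun z : ℝ => z * p + z ^ 2 / 8) (p + z / 4) z := by
      have h1 : HasDerivAt (fun z : ℝ => z * p) p z := (hasDerivAt_id z).mul_const p |>.congr_deriv (by ring)
      have h2 : HasDerivAt (fun z : ℝ => z ^ 2 / 8) (z / 4) z := by
        have := (hasDerivAt_pow 2 z).div_const 8
        exact this.congr_deriv (by norm_num; ring)
      exact h1.add h2
    exact hpoly.sub hlog
  have hf0 : f 0 = 0 := by
    simp [hf, hq]
  have hsign : ∀ z : ℝ, 0 ≤ z → 0 ≤ f' z := by
    intro z hz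
    have h := sigmoid_lip (z + a) a
    rw [hsig_a, hsig_eq z] at h
    have habs : |z + a - a| = z := by rw [add_sub_cancel_right, abs_of_nonneg hz]
    rw [habs] at h
    have := (abs_le.1 h).2
    simp only [hf']
    linarith
  have hsign' : ∀ z : ℝ, z ≤ 0 → f' z ≤ 0 := by
    intro z hz
    have h := sigmoid_lip (z + a) a
    rw [hsig_a, hsig_eq z] at h
    have habs : |z + a - a| = -z := by rw [add_sub_cancel_right, abs_of_nonpos hz]
    rw [habs] at h
    have := (abs_le.1 h).1
    simp only [hf']
    linarith
  have hfnonneg : 0 ≤ f L := by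
    rcases lt_trichotomy L 0 with hL | hL | hL
    · obtain ⟨ξ, hξ, hslope⟩ := exists_hasDerivAt_eq_slope f f' hL
        (fun x _ => (hder x).continuousAt.continuousWithinAt) (fun x _ => hder x)
      rw [eq_div_iff (by linarith : (0:ℝ) - L ≠ 0)] at hslope
      have hξ0 : f' ξ ≤ 0 := hsign' ξ hξ.2.le
      nlinarith [hslope, hf0]
    · simp [hL, hf0]
    · obtain ⟨ξ, hξ, hslope⟩ := exists_hasDerivAt_eq_slope f f' hL
        (fun x _ => (hder x).continuousAt.continuousWithinAt) (fun x _ => hder x)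
      rw [eq_div_iff (by linarith : L - 0 ≠ 0)] at hslope
      have hξ0 : 0 ≤ f' ξ := hsign ξ hξ.1.le
      nlinarith [hslope, hf0]
  have hlog_le : Real.log (q + p * Real.exp L) ≤ L * p + L ^ 2 / 8 := by
    simp only [hf] at hfnonneg
    linarith
  calc (1 - p) + p * Real.exp L = Real.exp (Real.log (q + p * Real.exp L)) := by
        rw [Real.exp_log (hden L)]
    _ ≤ Real.exp (L * p + L ^ 2 / 8) := Real.exp_le_exp.2 hlog_le

noncomputable def wB (n : ℕ) (p : ℝ) (j : ℕ) : ℝ :=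
  (n.choose j) * p ^ j * (1 - p) ^ (n - j)

lemma wB_nonneg {n : ℕ} {p : ℝ} (h0 : 0 ≤ p) (h1 : p ≤ 1) (j : ℕ) : 0 ≤ wB n p j := by
  unfold wB
  have : (0:ℝ) ≤ 1 - p := by linarith
  positivity

lemma binom_mgf (n : ℕ) (p L : ℝ) :
    ∑ j : Fin (n + 1), wB n p (j : ℕ) * Real.exp (L * (j : ℕ)) =
      (p * Real.exp L + (1 - p)) ^ n := by
  rw [Fin.sum_univ_eq_sum_range (fun j => wB n p j * Real.exp (L * j))]
  rw [add_pow]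
  apply Finset.sum_congr rfl
  intro j hj
  unfold wB
  rw [mul_comm L (j:ℝ), Real.exp_nat_mul, mul_pow]
  ring

lemma binom_row_sum (n : ℕ) (p : ℝ) : ∑ j : Fin (n + 1), wB n p (j : ℕ) = 1 := by
  have := binom_mgf n p 0
  simpa using this

/-- Hoeffding tail bound for the binomial distribution. -/
lemma binom_tail (n : ℕ) (hn : 0 < n) (p δ : ℝ) (h0 : 0 ≤ p) (h1 : p ≤ 1) (hδ : 0 < δ) :
    (∑ j : Fin (n + 1), if δ ≤ |((j:ℕ):ℝ) / n - p| then wB n p (j : ℕ) else 0)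
      ≤ 2 * Real.exp (-2 * n * δ ^ 2) := by
  have hnR : (0:ℝ) < (n:ℝ) := by exact_mod_cast hn
  have hwnn := wB_nonneg (n := n) h0 h1
  -- generic exponential tail: for any L and threshold a, sum over {L*(j-a) ≥ 0} is small
  have key : ∀ L a : ℝ, L * p + L^2/8 ≤ (L * a) / n - 2 * δ^2 →
      (∑ j : Fin (n + 1), if 0 ≤ L * ((j:ℕ) - a) then wB n p (j : ℕ) else 0)
        ≤ Real.exp (-2 * n * δ ^ 2) := by
    intro L a hLa
    have step1 : (∑ j : Fin (n + 1), if 0 ≤ L * ((j:ℕ) - a) then wB n p (j : ℕ) else 0)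
        ≤ ∑ j : Fin (n + 1), wB n p (j : ℕ) * Real.exp (L * ((j:ℕ) - a)) := by
      apply Finset.sum_le_sum
      intro j _
      by_cases h : 0 ≤ L * ((j:ℕ) - a)
      · rw [if_pos h]
        nlinarith [Real.one_le_exp h, hwnn (j:ℕ)]
      · rw [if_neg h]
        exact mul_nonneg (hwnn _) (Real.exp_pos _).le
    have step2 : ∑ j : Fin (n + 1), wB n p (j : ℕ) * Real.exp (L * ((j:ℕ) - a))
        = Real.exp (-(L * a)) * ∑ j : Fin (n + 1), wB n p (j : ℕ) * Real.exp (L * (j:ℕ)) := by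
      rw [Finset.mul_sum]
      apply Finset.sum_congr rfl
      intro j _
      rw [show L * ((j:ℕ) - a) = -(L*a) + L * (j:ℕ) from by ring, Real.exp_add]
      ring
    have step3 : (p * Real.exp L + (1 - p)) ^ n ≤ Real.exp (n * (L * p + L^2/8)) := by
      rw [show Real.exp ((n:ℝ) * (L * p + L^2/8)) = (Real.exp (L * p + L^2/8)) ^ n from
        (Real.exp_nat_mul _ n)]
      apply pow_le_pow_left₀ (by nlinarith [Real.exp_pos L])
      calc p * Real.exp L + (1 - p) = (1 - p) + p * Real.exp L := by ring
        _ ≤ _ := hoeff_scalar p L h0 h1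
    calc (∑ j : Fin (n + 1), if 0 ≤ L * ((j:ℕ) - a) then wB n p (j : ℕ) else 0)
        ≤ Real.exp (-(L * a)) * ∑ j : Fin (n + 1), wB n p (j : ℕ) * Real.exp (L * (j:ℕ)) := by
          rw [← step2]; exact step1
      _ = Real.exp (-(L * a)) * (p * Real.exp L + (1 - p)) ^ n := by rw [binom_mgf]
      _ ≤ Real.exp (-(L * a)) * Real.exp (n * (L * p + L^2/8)) := by
          exact mul_le_mul_of_nonneg_left step3 (Real.exp_pos _).le
      _ = Real.exp (-(L * a) + n * (L * p + L^2/8)) := (Real.exp_add _ _).symm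
      _ ≤ Real.exp (-2 * n * δ ^ 2) := by
          apply Real.exp_le_exp.2
          have := mul_le_mul_of_nonneg_left hLa hnR.le
          calc -(L * a) + n * (L * p + L^2/8) ≤ -(L*a) + n * ((L * a)/n - 2*δ^2) := by linarith
            _ = -2 * n * δ^2 := by field_simp; ring
    done
  -- upper tail
  have upper : (∑ j : Fin (n + 1), if p + δ ≤ ((j:ℕ):ℝ) / n then wB n p (j : ℕ) else 0)
      ≤ Real.exp (-2 * n * δ ^ 2) := by
    refine le_trans (Finset.sum_le_sum ?_) (key (4*δ) ((n:ℝ) * (p + δ)) ?_)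
    · intro j _
      by_cases h : p + δ ≤ ((j:ℕ):ℝ) / n
      · have hj : (n:ℝ) * (p + δ) ≤ (j:ℕ) := by
          rw [mul_comm, ← le_div_iff₀ hnR]; exact h
        rw [if_pos h, if_pos (by nlinarith : (0:ℝ) ≤ 4*δ*(((j:ℕ):ℝ) - (n:ℝ)*(p+δ)))]
      · rw [if_neg h]
        by_cases h2 : 0 ≤ 4*δ*((j:ℕ) - (n:ℝ)*(p+δ))
        · rw [if_pos h2]; exact hwnn _
        · rw [if_neg h2]
    · rw [show 4*δ*((n:ℝ)*(p+δ))/(n:ℝ) = 4*δ*(p+δ) from by field_simp]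
      nlinarith
  -- lower tail
  have lower : (∑ j : Fin (n + 1), if ((j:ℕ):ℝ) / n ≤ p - δ then wB n p (j : ℕ) else 0)
      ≤ Real.exp (-2 * n * δ ^ 2) := by
    refine le_trans (Finset.sum_le_sum ?_) (key (-(4*δ)) ((n:ℝ) * (p - δ)) ?_)
    · intro j _
      by_cases h : ((j:ℕ):ℝ) / n ≤ p - δ
      · have hj : ((j:ℕ):ℝ) ≤ (n:ℝ) * (p - δ) := by
          rw [mul_comm, ← div_le_iff₀ hnR]; exact h
        rw [if_pos h, if_pos (by nlinarith : (0:ℝ) ≤ -(4*δ)*(((j:ℕ):ℝ) - (n:ℝ)*(p-δ)))]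
      · rw [if_neg h]
        by_cases h2 : 0 ≤ -(4*δ)*((j:ℕ) - (n:ℝ)*(p-δ))
        · rw [if_pos h2]; exact hwnn _
        · rw [if_neg h2]
    · rw [show -(4*δ)*((n:ℝ)*(p-δ))/(n:ℝ) = -(4*δ)*(p-δ) from by field_simp]
      nlinarith
  -- combine
  have comb : (∑ j : Fin (n + 1), if δ ≤ |((j:ℕ):ℝ) / n - p| then wB n p (j : ℕ) else 0)
      ≤ (∑ j : Fin (n + 1), if p + δ ≤ ((j:ℕ):ℝ) / n then wB n p (j : ℕ) else 0)
        + (∑ j : Fin (n + 1), if ((j:ℕ):ℝ) / n ≤ p - δ then wB n p (j : ℕ) else 0) := by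
    rw [← Finset.sum_add_distrib]
    apply Finset.sum_le_sum
    intro j _
    by_cases h : δ ≤ |((j:ℕ):ℝ) / n - p|
    · rw [if_pos h]
      rcases le_abs.1 h with h' | h'
      · rw [if_pos (by linarith)]
        by_cases h2 : ((j:ℕ):ℝ) / n ≤ p - δ
        · rw [if_pos h2]; linarith [hwnn (j:ℕ)]
        · rw [if_neg h2]; simp
      · rw [show (if ((j:ℕ):ℝ) / n ≤ p - δ then wB n p (j:ℕ) else 0) = wB n p (j:ℕ) from
          if_pos (by linarith)]
        by_cases h2 : p + δ ≤ ((j:ℕ):ℝ) / n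
        · rw [if_pos h2]; linarith [hwnn (j:ℕ)]
        · rw [if_neg h2]; simp
    · rw [if_neg h]
      have : (0:ℝ) ≤ (if p + δ ≤ ((j:ℕ):ℝ) / n then wB n p (j:ℕ) else 0) := by
        by_cases h2 : p + δ ≤ ((j:ℕ):ℝ) / n
        · rw [if_pos h2]; exact hwnn _
        · rw [if_neg h2]
      have : (0:ℝ) ≤ (if ((j:ℕ):ℝ) / n ≤ p - δ then wB n p (j:ℕ) else 0) := by
        by_cases h2 : ((j:ℕ):ℝ) / n ≤ p - δ
        · rw [if_pos h2]; exact hwnn _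
        · rw [if_neg h2]
      linarith
  linarith [upper, lower, comb]

section Markov

variable (c : ℝ) (n : ℕ) (δ : ℝ) (x : Fin (n + 1))

lemma Ker_eq_wB (k j : Fin (n + 1)) : Ker c n k j = wB n (_root_.sigmoid (c * (k:ℕ) / n)) (j:ℕ) := rfl

lemma Ker_nonneg (k j : Fin (n + 1)) : 0 ≤ Ker c n k j := by
  rw [Ker_eq_wB]
  exact wB_nonneg (_root_.sigmoid_pos _).le (_root_.sigmoid_lt_one _).le _

lemma Ker_row_sum (k : Fin (n + 1)) : ∑ j, Ker c n k j = 1 := by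
  simp only [Ker_eq_wB]
  exact binom_row_sum n _

lemma KerPow_nonneg (s : ℕ) (i j : Fin (n + 1)) : 0 ≤ KerPow c n s i j := by
  induction s generalizing i j with
  | zero => unfold KerPow; positivity
  | succ s ih =>
      unfold KerPow
      exact Finset.sum_nonneg fun k _ => mul_nonneg (ih i k) (Ker_nonneg c n k j)

lemma KerPow_row_sum (s : ℕ) (i : Fin (n + 1)) : ∑ j, KerPow c n s i j = 1 := by
  induction s generalizing i with
  | zero => unfold KerPow; simp
  | succ s ih =>
      unfold KerPow
      rw [Finset.sum_comm]
      calc ∑ k, ∑ j, KerPow c n s i k * Ker c n k j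
          = ∑ k, KerPow c n s i k * ∑ j, Ker c n k j := by
            apply Finset.sum_congr rfl; intro k _; rw [Finset.mul_sum]
        _ = ∑ k, KerPow c n s i k := by
            apply Finset.sum_congr rfl; intro k _; rw [Ker_row_sum, mul_one]
        _ = 1 := ih i

/-- Good-path restricted measure. -/
noncomputable def nu : ℕ → Fin (n + 1) → ℝ
  | 0 => fun j => if x = j then 1 else 0
  | s + 1 => fun j => ∑ k, nu s k *
      (if |((j:ℕ):ℝ) / n - mc c (((k:ℕ):ℝ) / n)| < δ then Ker c n k j else 0)

lemma nu_nonneg (s : ℕ) (j : Fin (n + 1)) : 0 ≤ nu c n δ x s j := by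
  induction s generalizing j with
  | zero => unfold nu; positivity
  | succ s ih =>
      unfold nu
      apply Finset.sum_nonneg
      intro k _
      apply mul_nonneg (ih k)
      by_cases h : |((j:ℕ):ℝ) / n - mc c (((k:ℕ):ℝ) / n)| < δ
      · rw [if_pos h]; exact Ker_nonneg c n k j
      · rw [if_neg h]

lemma nu_le_KerPow (s : ℕ) (j : Fin (n + 1)) : nu c n δ x s j ≤ KerPow c n s x j := by
  induction s generalizing j with
  | zero => unfold nu KerPow; exact le_refl _
  | succ s ih =>
      unfold nu KerPow
      apply Finset.sum_le_sum
      intro k _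
      apply mul_le_mul (ih k) ?_ ?_ (KerPow_nonneg c n s x k)
      · by_cases h : |((j:ℕ):ℝ) / n - mc c (((k:ℕ):ℝ) / n)| < δ
        · rw [if_pos h]
        · rw [if_neg h]; exact Ker_nonneg c n k j
      · by_cases h : |((j:ℕ):ℝ) / n - mc c (((k:ℕ):ℝ) / n)| < δ
        · rw [if_pos h]; exact Ker_nonneg c n k j
        · rw [if_neg h]

lemma nu_sum_le_one (s : ℕ) : ∑ j, nu c n δ x s j ≤ 1 := by
  calc ∑ j, nu c n δ x s j ≤ ∑ j, KerPow c n s x j :=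
        Finset.sum_le_sum fun j _ => nu_le_KerPow c n δ x s j
    _ = 1 := KerPow_row_sum c n s x

lemma nu_loss (hn : 0 < n) (hδ : 0 < δ) (s : ℕ) :
    1 - ∑ j, nu c n δ x (s + 1) j ≤ (1 - ∑ j, nu c n δ x s j) + 2 * Real.exp (-2 * n * δ ^ 2) := by
  have hE : (0:ℝ) ≤ 2 * Real.exp (-2 * n * δ ^ 2) := by positivity
  have hbad : ∀ k : Fin (n + 1),
      (∑ j : Fin (n+1), if ¬ (|((j:ℕ):ℝ) / n - mc c (((k:ℕ):ℝ) / n)| < δ) then Ker c n k j else 0)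
        ≤ 2 * Real.exp (-2 * n * δ ^ 2) := by
    intro k
    have := binom_tail n hn (_root_.sigmoid (c * (k:ℕ) / n)) δ (_root_.sigmoid_pos _).le
      (_root_.sigmoid_lt_one _).le hδ
    refine le_trans (le_of_eq ?_) this
    apply Finset.sum_congr rfl
    intro j _
    have hmc : mc c (((k:ℕ):ℝ) / n) = _root_.sigmoid (c * (k:ℕ) / n) := by
      unfold mc; rw [mul_div_assoc]
    rw [hmc]
    simp only [not_lt]
    rfl
  have hgood : ∀ k : Fin (n + 1),
      1 - 2 * Real.exp (-2 * n * δ ^ 2) ≤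
        ∑ j : Fin (n+1), (if |((j:ℕ):ℝ) / n - mc c (((k:ℕ):ℝ) / n)| < δ then Ker c n k j else 0) := by
    intro k
    have hsplit : (∑ j : Fin (n+1), (if |((j:ℕ):ℝ) / n - mc c (((k:ℕ):ℝ) / n)| < δ then Ker c n k j else 0))
        + (∑ j : Fin (n+1), if ¬ (|((j:ℕ):ℝ) / n - mc c (((k:ℕ):ℝ) / n)| < δ) then Ker c n k j else 0)
        = 1 := by
      rw [← Finset.sum_add_distrib, ← Ker_row_sum c n k]
      apply Finset.sum_congr rfl
      intro j _
      by_cases h : |((j:ℕ):ℝ) / n - mc c (((k:ℕ):ℝ) / n)| < δ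
      · rw [if_pos h, if_neg (not_not_intro h), add_zero]
      · rw [if_neg h, if_pos h, zero_add]
    linarith [hbad k]
  have hstep : ∑ j, nu c n δ x (s + 1) j ≥
      (1 - 2 * Real.exp (-2 * n * δ ^ 2)) * ∑ k, nu c n δ x s k := by
    show _ ≤ _
    calc (1 - 2 * Real.exp (-2 * n * δ ^ 2)) * ∑ k, nu c n δ x s k
        = ∑ k, nu c n δ x s k * (1 - 2 * Real.exp (-2 * n * δ ^ 2)) := by
          rw [Finset.mul_sum]; apply Finset.sum_congr rfl; intro k _; ring
      _ ≤ ∑ k, nu c n δ x s k *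
            ∑ j : Fin (n+1), (if |((j:ℕ):ℝ) / n - mc c (((k:ℕ):ℝ) / n)| < δ then Ker c n k j else 0) := by
          apply Finset.sum_le_sum
          intro k _
          exact mul_le_mul_of_nonneg_left (hgood k) (nu_nonneg c n δ x s k)
      _ = ∑ j, nu c n δ x (s + 1) j := by
          show _ = ∑ j, ∑ k, nu c n δ x s k * _
          rw [Finset.sum_comm]
          apply Finset.sum_congr rfl
          intro k _
          rw [Finset.mul_sum]
  have hsum_le := nu_sum_le_one c n δ x s
  nlinarith [hstep, hsum_le, hE]

lemma nu_total (hn : 0 < n) (hδ : 0 < δ) (s : ℕ) :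
    1 - ∑ j, nu c n δ x s j ≤ s * (2 * Real.exp (-2 * n * δ ^ 2)) := by
  induction s with
  | zero =>
      unfold nu
      simp
  | succ s ih =>
      have := nu_loss c n δ x hn hδ s
      push_cast
      nlinarith [this, ih]

end Markov

section Support
variable {xs c : ℝ} (n : ℕ) (δ : ℝ) (x : Fin (n + 1))

lemma nu_zero (j : Fin (n+1)) : nu c n δ x 0 j = if x = j then 1 else 0 := rfl

lemma nu_succ (s : ℕ) (j : Fin (n+1)) : nu c n δ x (s + 1) j = ∑ k, nu c n δ x s k *
    (if |((j:ℕ):ℝ) / n - mc c (((k:ℕ):ℝ) / n)| < δ then Ker c n k j else 0) := rfl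

lemma nu_support (hxs : 0 < xs ∧ xs * Real.exp xs / (1 + Real.exp xs) = 1)
    (hc : c = -1 - xs - Real.exp xs) (hδ : 0 < δ) :
    ∀ s : ℕ, ∀ k : Fin (n + 1), nu c n δ x (2 * s) k ≠ 0 →
      |((k:ℕ):ℝ) / n - (mc c)^[2 * s] (((x:ℕ):ℝ) / n)| ≤ s * ((|c| + 4) / 4) * δ ∧
        (1 ≤ s → |((k:ℕ):ℝ) / n - (mc c)^[2 * s] (((x:ℕ):ℝ) / n)| < s * ((|c| + 4) / 4) * δ) := by
  intro s
  induction s with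
  | zero =>
      intro k hk
      rw [nu_zero] at hk
      have hxk : x = k := by
        by_contra hne
        rw [if_neg hne] at hk
        exact hk rfl
      subst hxk
      simp
  | succ s ih =>
      intro k hk
      rw [show 2 * (s + 1) = (2 * s + 1) + 1 from by ring, nu_succ] at hk
      obtain ⟨l, -, hl⟩ := Finset.exists_ne_zero_of_sum_ne_zero hk
      have hl1 : nu c n δ x (2 * s + 1) l ≠ 0 := left_ne_zero_of_mul hl
      have cond2 : |((k:ℕ):ℝ) / n - mc c (((l:ℕ):ℝ) / n)| < δ := by
        by_contra hcon
        rw [if_neg hcon, mul_zero] at hl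
        exact hl rfl
      rw [nu_succ] at hl1
      obtain ⟨m, -, hm⟩ := Finset.exists_ne_zero_of_sum_ne_zero hl1
      have hm1 : nu c n δ x (2 * s) m ≠ 0 := left_ne_zero_of_mul hm
      have cond1 : |((l:ℕ):ℝ) / n - mc c (((m:ℕ):ℝ) / n)| < δ := by
        by_contra hcon
        rw [if_neg hcon, mul_zero] at hm
        exact hm rfl
      have hIH := (ih m hm1).1
      set x0 : ℝ := ((x:ℕ):ℝ) / n with hx0
      set y : ℝ := (mc c)^[2 * s] x0 with hy
      have hiter : (mc c)^[2 * (s + 1)] x0 = mc c (mc c y) := by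
        rw [show 2 * (s + 1) = (2 * s + 1) + 1 from by ring,
          Function.iterate_succ_apply', Function.iterate_succ_apply', hy]
      have tri : |((k:ℕ):ℝ) / n - mc c (mc c y)| ≤
          |((k:ℕ):ℝ) / n - mc c (((l:ℕ):ℝ) / n)|
            + |mc c (((l:ℕ):ℝ) / n) - mc c (mc c (((m:ℕ):ℝ) / n))|
            + |mc c (mc c (((m:ℕ):ℝ) / n)) - mc c (mc c y)| := by
        have := abs_sub_le (((k:ℕ):ℝ) / n) (mc c (((l:ℕ):ℝ) / n)) (mc c (mc c y))
        have h2 := abs_sub_le (mc c (((l:ℕ):ℝ) / n)) (mc c (mc c (((m:ℕ):ℝ) / n)))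
          (mc c (mc c y))
        linarith
      have b2 : |mc c (((l:ℕ):ℝ) / n) - mc c (mc c (((m:ℕ):ℝ) / n))| ≤ |c| / 4 * δ := by
        refine le_trans (mc_lip c _ _) ?_
        exact mul_le_mul_of_nonneg_left cond1.le (by positivity)
      have b3 : |mc c (mc c (((m:ℕ):ℝ) / n)) - mc c (mc c y)| ≤ s * ((|c| + 4) / 4) * δ :=
        le_trans (two_lip hxs hc _ _) hIH
      have habs0 : (0:ℝ) ≤ |c| := abs_nonneg c
      have hstrict : |((k:ℕ):ℝ) / n - (mc c)^[2 * (s + 1)] x0| < (s+1) * ((|c| + 4) / 4) * δ := by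
        rw [hiter]
        calc |((k:ℕ):ℝ) / n - mc c (mc c y)| ≤ _ := tri
          _ < δ + |c| / 4 * δ + s * ((|c| + 4) / 4) * δ := by linarith
          _ = (s+1) * ((|c| + 4) / 4) * δ := by ring
      have hcast : ((s+1 : ℕ) : ℝ) = (s:ℝ) + 1 := by push_cast; ring
      rw [hcast]
      exact ⟨le_of_lt (by exact_mod_cast hstrict), fun _ => by exact_mod_cast hstrict⟩

end Support


open scoped Classical in
/-- Concentration of the 2t-step kernel around the 2t-th iterate of the dynamical system
when c = c⋆. -/
theorem k2t_concentration (xs c : ℝ)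
    (hxs : 0 < xs ∧ xs * Real.exp xs / (1 + Real.exp xs) = 1)
    (hc : c = -1 - xs - Real.exp xs) :
    ∀ n : ℕ, 0 < n → ∀ t : ℕ, 1 ≤ t → ∀ x : Fin (n + 1), ∀ ε : ℝ, 0 < ε →
      (∑ j : Fin (n + 1),
          if ε ≤ |((j:ℕ):ℝ)/n - (mc c)^[2*t] (((x:ℕ):ℝ)/n)| then KerPow c n (2*t) x j else 0)
        ≤ 4 * t * Real.exp (-32 * n * ε^2 / ((|c| + 4)^2 * t^2)) := by
  intro n hn t ht x ε hε
  have htR : (0:ℝ) < (t:ℝ) := by exact_mod_cast ht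
  have hb4 : (0:ℝ) < |c| + 4 := by positivity
  set δ : ℝ := 4 * ε / ((|c| + 4) * t) with hδdef
  have hδ : 0 < δ := by positivity
  have hE2 : -2 * (n:ℝ) * δ ^ 2 = -32 * n * ε ^ 2 / ((|c| + 4) ^ 2 * t ^ 2) := by
    rw [hδdef]
    field_simp
    ring
  have hεeq : (t:ℝ) * ((|c| + 4) / 4) * δ = ε := by
    rw [hδdef]
    field_simp
  have step1 : (∑ j : Fin (n + 1),
      if ε ≤ |((j:ℕ):ℝ)/n - (mc c)^[2*t] (((x:ℕ):ℝ)/n)| then KerPow c n (2*t) x j else 0)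
      ≤ ∑ j : Fin (n + 1), (KerPow c n (2*t) x j - nu c n δ x (2*t) j) := by
    apply Finset.sum_le_sum
    intro j _
    by_cases h : ε ≤ |((j:ℕ):ℝ)/n - (mc c)^[2*t] (((x:ℕ):ℝ)/n)|
    · rw [if_pos h]
      have hnu0 : nu c n δ x (2*t) j = 0 := by
        by_contra hne
        have := (nu_support n δ x hxs hc hδ t j hne).2 ht
        rw [hεeq] at this
        linarith
      rw [hnu0]
      ring_nf
      exact le_refl _
    · rw [if_neg h]
      have := nu_le_KerPow c n δ x (2*t) j
      linarith
  have step2 : ∑ j : Fin (n + 1), (KerPow c n (2*t) x j - nu c n δ x (2*t) j)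
      = 1 - ∑ j, nu c n δ x (2*t) j := by
    rw [Finset.sum_sub_distrib, KerPow_row_sum]
  have step3 := nu_total c n δ x hn hδ (2*t)
  calc (∑ j : Fin (n + 1),
      if ε ≤ |((j:ℕ):ℝ)/n - (mc c)^[2*t] (((x:ℕ):ℝ)/n)| then KerPow c n (2*t) x j else 0)
      ≤ 1 - ∑ j, nu c n δ x (2*t) j := by rw [← step2]; exact step1
    _ ≤ (2*t : ℕ) * (2 * Real.exp (-2 * n * δ ^ 2)) := step3
    _ = 4 * t * Real.exp (-2 * n * δ ^ 2) := by push_cast; ring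
    _ = 4 * t * Real.exp (-32 * n * ε^2 / ((|c| + 4)^2 * t^2)) := by rw [hE2]
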